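/- arXiv:1508.04014 — 4 statements merged into one kernel-verified Lean document; each statement's English description precedes it below -/
import Mathlib

section
/- Let a : [0,1] → ℝ be continuous, with a(x₀)=0 for some x₀ ∈ (0,1), a > 0 on [0,1]\{x₀}, a ∈ W^{1,1}(0,1), and suppose there exists K > 0 such that (x-x₀)a'(x) ≤ K a(x) for a.e. x ∈ [0,1]. Then for all γ ≥ K the map x ↦ |x-x₀|^γ / a(x) is nonincreasing on [0,x₀) and nondecreasing on (x₀,1]. -/
open MeasureTheory Set Filter

/-!
Away from `x₀` the function `ψ x = a x / |x - x₀| ^ γ` is absolutely continuous, and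
`(x - x₀) ψ' x = ((x - x₀) a' x - γ a x) / |x - x₀| ^ γ ≤ 0` almost everywhere because
`K ≤ γ` and `a > 0` off `x₀`. Hence `ψ` is nondecreasing on the left of `x₀` and nonincreasing
on its right, and the function of the theorem is `1 / ψ`.
-/

namespace AbsolutelyContinuousOnInterval

theorem congr {X : Type*} [PseudoMetricSpace X] {f g : ℝ → X} {a b : ℝ}
    (hf : AbsolutelyContinuousOnInterval f a b) (hfg : EqOn f g (uIcc a b)) :
    AbsolutelyContinuousOnInterval g a b := by
  refine Tendsto.congr' ?_ hf
  filter_upwards [eventually_inf_principal.mpr (Eventually.of_forall fun _ hE => hE)] with E hE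
  exact Finset.sum_congr rfl fun i hi => by rw [hfg (hE.1 i hi).1, hfg (hE.1 i hi).2]

theorem le_of_ae_deriv_nonneg {f : ℝ → ℝ} {a b : ℝ} (hab : a ≤ b)
    (hf : AbsolutelyContinuousOnInterval f a b)
    (hf' : ∀ᵐ t, t ∈ Icc a b → 0 ≤ deriv f t) :
    f a ≤ f b := by
  rw [← sub_nonneg, ← hf.integral_deriv_eq_sub]
  exact intervalIntegral.integral_nonneg_of_ae_restrict hab
    ((ae_restrict_iff' measurableSet_Icc).2 hf')

theorem le_of_ae_deriv_nonpos {f : ℝ → ℝ} {a b : ℝ} (hab : a ≤ b)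
    (hf : AbsolutelyContinuousOnInterval f a b)
    (hf' : ∀ᵐ t, t ∈ Icc a b → deriv f t ≤ 0) :
    f b ≤ f a := by
  simpa using hf.fun_neg.le_of_ae_deriv_nonneg hab (by simpa only [deriv.fun_neg', neg_nonneg])

end AbsolutelyContinuousOnInterval

theorem absolutelyContinuousOnInterval_of_eq_add_integral {f f' : ℝ → ℝ} {a b : ℝ}
    (hf' : IntervalIntegrable f' volume a b)
    (hf : ∀ x ∈ uIcc a b, f x = f a + ∫ t in a..x, f' t) :
    AbsolutelyContinuousOnInterval f a b :=
  ((contDiffOn_const (c := f a)).absolutelyContinuousOnInterval.fun_add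
    (hf'.absolutelyContinuousOnInterval_intervalIntegral left_mem_uIcc)).congr
    fun x hx => (hf x hx).symm

theorem hasDerivAt_abs_sub_rpow {c p t : ℝ} (ht : t ≠ c) :
    HasDerivAt (fun x => |x - c| ^ p) (p * |t - c| ^ p / (t - c)) t := by
  have hne : t - c ≠ 0 := sub_ne_zero.2 ht
  have habs : HasDerivAt (fun x => |x - c|) (SignType.sign (t - c) : ℝ) t := by
    simpa using (hasDerivAt_abs hne).comp_sub_const t c
  convert habs.rpow_const (p := p) (Or.inl (abs_ne_zero.2 hne)) using 1
  rw [Real.rpow_sub_one (abs_ne_zero.2 hne)]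
  rcases hne.lt_or_gt with h | h
  · simp [h, abs_of_neg]
    field_simp
    ring
  · simp [h, abs_of_pos]
    field_simp

theorem sub_mul_deriv_div_abs_sub_rpow {f : ℝ → ℝ} {c γ t : ℝ}
    (hf : DifferentiableAt ℝ f t) (ht : t ≠ c) :
    (t - c) * deriv (fun x => f x / |x - c| ^ γ) t
      = ((t - c) * deriv f t - γ * f t) / |t - c| ^ γ := by
  have hne : t - c ≠ 0 := sub_ne_zero.2 ht
  have hw : |t - c| ^ γ ≠ 0 := (Real.rpow_pos_of_pos (abs_pos.2 hne) γ).ne'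
  rw [(hf.hasDerivAt.fun_div (hasDerivAt_abs_sub_rpow ht) hw).deriv]
  field_simp

theorem AbsolutelyContinuousOnInterval.div_abs_sub_rpow {f : ℝ → ℝ} {u v c : ℝ} (γ : ℝ)
    (hf : AbsolutelyContinuousOnInterval f u v) (hc : c ∉ uIcc u v) :
    AbsolutelyContinuousOnInterval (fun x => f x / |x - c| ^ γ) u v := by
  have hne : ∀ x ∈ uIcc u v, x - c ≠ 0 := fun x hx =>
    sub_ne_zero.2 (ne_of_mem_of_not_mem hx hc)
  have hw : ContDiffOn ℝ 1 (fun x => (|x - c| ^ γ)⁻¹) (uIcc u v) :=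
    (((contDiffOn_id.sub contDiffOn_const).abs hne).rpow_const_of_ne
      fun x hx => abs_ne_zero.2 (hne x hx)).inv
      fun x hx => (Real.rpow_pos_of_pos (abs_pos.2 (hne x hx)) γ).ne'
  simpa only [div_eq_mul_inv] using hf.fun_mul hw.absolutelyContinuousOnInterval

theorem ae_sub_mul_deriv_div_abs_sub_rpow_nonpos {f : ℝ → ℝ} {u v c γ : ℝ}
    (hf : AbsolutelyContinuousOnInterval f u v) (hc : c ∉ uIcc u v)
    (hdeg : ∀ᵐ t, t ∈ uIcc u v → (t - c) * deriv f t ≤ γ * f t) :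
    ∀ᵐ t, t ∈ uIcc u v → (t - c) * deriv (fun x => f x / |x - c| ^ γ) t ≤ 0 := by
  filter_upwards [hdeg, hf.ae_differentiableAt] with t hdeg_t hdiff ht
  have htc : t ≠ c := ne_of_mem_of_not_mem ht hc
  rw [sub_mul_deriv_div_abs_sub_rpow (hdiff ht) htc]
  exact div_nonpos_of_nonpos_of_nonneg (by linarith [hdeg_t ht]) (by positivity)

theorem monotoneOn_abs_sub_rpow_div {f : ℝ → ℝ} {c b γ : ℝ}
    (hf : AbsolutelyContinuousOnInterval f c b) (hpos : ∀ x ∈ Ioc c b, 0 < f x)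
    (hdeg : ∀ᵐ t, t ∈ Ioc c b → (t - c) * deriv f t ≤ γ * f t) :
    MonotoneOn (fun x => |x - c| ^ γ / f x) (Ioc c b) := by
  intro p hp q hq hpq
  have hsub : Icc p q ⊆ Ioc c b := Icc_subset_Ioc_iff hpq |>.2 ⟨hp.1, hq.2⟩
  rw [← uIcc_of_le hpq] at hsub
  have hc : c ∉ uIcc p q := fun h => lt_irrefl c (hsub h).1
  have hfpq : AbsolutelyContinuousOnInterval f p q :=
    hf.mono (hsub.trans Ioc_subset_Icc_self |>.trans Icc_subset_uIcc)
  have hψ' := ae_sub_mul_deriv_div_abs_sub_rpow_nonpos (γ := γ) hfpq hc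
    (by filter_upwards [hdeg] with t ht ht' using ht (hsub ht'))
  have hψ : f q / |q - c| ^ γ ≤ f p / |p - c| ^ γ := by
    refine (hfpq.div_abs_sub_rpow γ hc).le_of_ae_deriv_nonpos hpq ?_
    filter_upwards [hψ'] with t ht ht'
    rw [← uIcc_of_le hpq] at ht'
    exact nonpos_of_mul_nonpos_right (ht ht') (sub_pos.2 (hsub ht').1)
  have hψq : 0 < f q / |q - c| ^ γ :=
    div_pos (hpos q hq) (Real.rpow_pos_of_pos (abs_sub_pos.2 hq.1.ne') γ)
  simpa only [← inv_div (f _)] using inv_anti₀ hψq hψ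

theorem antitoneOn_abs_sub_rpow_div {f : ℝ → ℝ} {b c γ : ℝ}
    (hf : AbsolutelyContinuousOnInterval f b c) (hpos : ∀ x ∈ Ico b c, 0 < f x)
    (hdeg : ∀ᵐ t, t ∈ Ico b c → (t - c) * deriv f t ≤ γ * f t) :
    AntitoneOn (fun x => |x - c| ^ γ / f x) (Ico b c) := by
  intro p hp q hq hpq
  have hsub : Icc p q ⊆ Ico b c := Icc_subset_Ico_iff hpq |>.2 ⟨hp.1, hq.2⟩
  rw [← uIcc_of_le hpq] at hsub
  have hc : c ∉ uIcc p q := fun h => lt_irrefl c (hsub h).2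
  have hfpq : AbsolutelyContinuousOnInterval f p q :=
    hf.mono (hsub.trans Ico_subset_Icc_self |>.trans Icc_subset_uIcc)
  have hψ' := ae_sub_mul_deriv_div_abs_sub_rpow_nonpos (γ := γ) hfpq hc
    (by filter_upwards [hdeg] with t ht ht' using ht (hsub ht'))
  have hψ : f p / |p - c| ^ γ ≤ f q / |q - c| ^ γ := by
    refine (hfpq.div_abs_sub_rpow γ hc).le_of_ae_deriv_nonneg hpq ?_
    filter_upwards [hψ'] with t ht ht'
    rw [← uIcc_of_le hpq] at ht'
    exact nonneg_of_mul_nonpos_right (ht ht') (sub_neg.2 (hsub ht').2)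
  have hψp : 0 < f p / |p - c| ^ γ :=
    div_pos (hpos p hp) (Real.rpow_pos_of_pos (abs_sub_pos.2 hp.2.ne) γ)
  simpa only [← inv_div (f _)] using inv_anti₀ hψp hψ

theorem stmt0_general (a : ℝ → ℝ) (x₀ K : ℝ)
    (hx₀ : x₀ ∈ Set.Ioo (0:ℝ) 1)
    (hpos : ∀ x ∈ Set.Icc (0:ℝ) 1, x ≠ x₀ → 0 < a x)
    (hW11 : MeasureTheory.IntegrableOn (deriv a) (Set.Icc 0 1) ∧
      ∀ x ∈ Set.Icc (0:ℝ) 1, a x = a 0 + ∫ t in (0:ℝ)..x, deriv a t)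
    (hineq : ∀ᵐ x ∂(MeasureTheory.volume.restrict (Set.Icc (0:ℝ) 1)),
      (x - x₀) * deriv a x ≤ K * a x) :
    ∀ γ : ℝ, K ≤ γ →
      AntitoneOn (fun x => |x - x₀| ^ γ / a x) (Set.Ico 0 x₀) ∧
      MonotoneOn (fun x => |x - x₀| ^ γ / a x) (Set.Ioc x₀ 1) := by
  intro γ hγ
  obtain ⟨hint, hrepr⟩ := hW11
  have hx₀' : x₀ ∈ uIcc 0 1 := by
    rw [uIcc_of_le zero_le_one]; exact Ioo_subset_Icc_self hx₀
  have hac : AbsolutelyContinuousOnInterval a 0 1 := by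
    rw [← uIcc_of_le zero_le_one] at hint hrepr
    exact absolutelyContinuousOnInterval_of_eq_add_integral hint.intervalIntegrable hrepr
  have hdeg : ∀ᵐ t, t ∈ Icc (0:ℝ) 1 → t ≠ x₀ →
      (t - x₀) * deriv a t ≤ γ * a t := by
    filter_upwards [(ae_restrict_iff' measurableSet_Icc).1 hineq] with t ht hmem hne
    exact (ht hmem).trans (mul_le_mul_of_nonneg_right hγ (hpos t hmem hne).le)
  have hleft : Ico 0 x₀ ⊆ Icc 0 1 := Ico_subset_Icc_self.trans (Icc_subset_Icc_right hx₀.2.le)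
  have hright : Ioc x₀ 1 ⊆ Icc 0 1 := Ioc_subset_Icc_self.trans (Icc_subset_Icc_left hx₀.1.le)
  refine ⟨antitoneOn_abs_sub_rpow_div (hac.mono (uIcc_subset_uIcc left_mem_uIcc hx₀'))
      (fun x hx => hpos x (hleft hx) hx.2.ne) ?_,
    monotoneOn_abs_sub_rpow_div (hac.mono (uIcc_subset_uIcc hx₀' right_mem_uIcc))
      (fun x hx => hpos x (hright hx) hx.1.ne') ?_⟩
  · filter_upwards [hdeg] with t ht hmem using ht (hleft hmem) hmem.2.ne
  · filter_upwards [hdeg] with t ht hmem using ht (hright hmem) hmem.1.ne'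

/-- Lemma 2.1.1: under the interior degeneracy hypothesis, for all γ ≥ K the map
`x ↦ |x-x₀|^γ / a x` is nonincreasing on the left of `x₀` and nondecreasing on the right. -/
theorem stmt0 (a : ℝ → ℝ) (x₀ K : ℝ)
    (hx₀ : x₀ ∈ Set.Ioo (0:ℝ) 1)
    (hcont : ContinuousOn a (Set.Icc 0 1))
    (ha0 : a x₀ = 0)
    (hpos : ∀ x ∈ Set.Icc (0:ℝ) 1, x ≠ x₀ → 0 < a x)
    (hK : 0 < K)
    (hW11 : MeasureTheory.IntegrableOn (deriv a) (Set.Icc 0 1) ∧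
      ∀ x ∈ Set.Icc (0:ℝ) 1, a x = a 0 + ∫ t in (0:ℝ)..x, deriv a t)
    (hineq : ∀ᵐ x ∂(MeasureTheory.volume.restrict (Set.Icc (0:ℝ) 1)),
      (x - x₀) * deriv a x ≤ K * a x) :
    ∀ γ : ℝ, K ≤ γ →
      AntitoneOn (fun x => |x - x₀| ^ γ / a x) (Set.Ico 0 x₀) ∧
      MonotoneOn (fun x => |x - x₀| ^ γ / a x) (Set.Ioc x₀ 1) :=
  stmt0_general a x₀ K hx₀ hpos hW11 hineq
end

section
/- Under the assumptions that a : [0,1] → ℝ is Lipschitz (W^{1,∞}), a(x₀)=0 for some x₀ ∈ (0,1), a > 0 on [0,1]\{x₀}, and (x-x₀)a'(x) ≤ K a(x) a.e. with K ∈ [1,2), the function 1/√a is integrable on (0,1) but 1/a is not integrable on (0,1). -/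
/-!
Being Lipschitz, `a` is absolutely continuous, and `(x - x₀) a' ≤ K a` says exactly that
`a(x) / (x - x₀)^K` is nonincreasing on `(x₀, 1]`. Hence `a(x) ≥ c (x - x₀)^K` there, and
`1/√a ≤ C (x - x₀)^(-K/2)` is integrable because `K < 2`. The reflection `x ↦ -x` preserves the
hypothesis, so the same holds on `[0, x₀)`. On the other hand `a(x₀) = 0` and the Lipschitz bound
give `a(x) ≤ L (x - x₀)`, so `1/a` dominates `1/(L (x - x₀))`, which is not integrable.
-/

open MeasureTheory Set
open scoped NNReal

theorem AbsolutelyContinuousOnInterval.antitoneOn_of_ae_deriv_nonpos {f : ℝ → ℝ} {c d : ℝ}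
    (hf : AbsolutelyContinuousOnInterval f c d)
    (hf' : ∀ᵐ x ∂volume.restrict (Icc c d), deriv f x ≤ 0) : AntitoneOn f (Icc c d) := by
  intro x hx y hy hxy
  have hsub : Icc x y ⊆ Icc c d := Icc_subset_Icc hx.1 hy.2
  have hint : ∫ t in x..y, deriv f t ≤ 0 := by
    rw [intervalIntegral.integral_of_le hxy]
    exact setIntegral_nonpos_of_ae_restrict
      (ae_restrict_of_ae_restrict_of_subset (Ioc_subset_Icc_self.trans hsub) hf')
  have hAC : AbsolutelyContinuousOnInterval f x y :=
    hf.mono (by simpa [uIcc_of_le hxy, uIcc_of_le (hx.1.trans hx.2)] using hsub)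
  linarith [hAC.integral_deriv_eq_sub]

theorem div_rpow_mul_rpow_le_of_ae_deriv_le {a : ℝ → ℝ} {x₀ b K : ℝ} {L : ℝ≥0}
    (hLip : LipschitzOnWith L a (Icc x₀ b))
    (hineq : ∀ᵐ x ∂volume.restrict (Icc x₀ b), (x - x₀) * deriv a x ≤ K * a x)
    {x : ℝ} (hx : x ∈ Ioc x₀ b) : a b / (b - x₀) ^ K * (x - x₀) ^ K ≤ a x := by
  obtain ⟨hx₀x, hxb⟩ := hx
  have hsub : Icc x b ⊆ Icc x₀ b := Icc_subset_Icc_left hx₀x.le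
  have hpos : ∀ t ∈ Icc x b, 0 < t - x₀ := fun t ht => sub_pos.2 (hx₀x.trans_le ht.1)
  set φ : ℝ → ℝ := fun t => (t - x₀) ^ (-K)
  have hφ : ∀ t ∈ Icc x b, HasDerivAt φ (-K * (t - x₀) ^ (-K - 1)) t := fun t ht => by
    simpa using ((hasDerivAt_id t).sub_const x₀).rpow_const (p := -K) (Or.inl (hpos t ht).ne')
  have haAC : AbsolutelyContinuousOnInterval a x b :=
    (hLip.mono (by rwa [uIcc_of_le hxb])).absolutelyContinuousOnInterval
  have hφAC : AbsolutelyContinuousOnInterval φ x b := by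
    refine ContDiffOn.absolutelyContinuousOnInterval ?_
    rw [uIcc_of_le hxb]
    exact (contDiffOn_id.sub contDiffOn_const).rpow_const_of_ne fun t ht => (hpos t ht).ne'
  have hderiv : ∀ᵐ t ∂volume.restrict (Icc x b), deriv (fun t => a t * φ t) t ≤ 0 := by
    filter_upwards [ae_restrict_of_ae_restrict_of_subset hsub hineq,
      ae_restrict_of_ae haAC.ae_differentiableAt, ae_restrict_mem measurableSet_Icc]
      with t hineq_t hdiff_t ht
    have hprod : deriv (fun t => a t * φ t) t =
        φ t / (t - x₀) * ((t - x₀) * deriv a t - K * a t) := by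
      rw [((hdiff_t (by rwa [uIcc_of_le hxb])).hasDerivAt.fun_mul (hφ t ht)).deriv]
      have ht₀ : t - x₀ ≠ 0 := (hpos t ht).ne'
      simp only [φ, Real.rpow_sub_one ht₀]
      field_simp
      ring
    rw [hprod]
    exact mul_nonpos_of_nonneg_of_nonpos (by have := hpos t ht; positivity) (by linarith)
  have hgb : a b / (b - x₀) ^ K ≤ a x / (x - x₀) ^ K := by
    simpa [φ, Real.rpow_neg (hpos b ⟨hxb, le_rfl⟩).le, Real.rpow_neg (hpos x ⟨le_rfl, hxb⟩).le,
      div_eq_mul_inv] using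
      (haAC.fun_mul hφAC).antitoneOn_of_ae_deriv_nonpos hderiv ⟨le_rfl, hxb⟩ ⟨hxb, le_rfl⟩ hxb
  have hxK : 0 < (x - x₀) ^ K := Real.rpow_pos_of_pos (hpos x ⟨le_rfl, hxb⟩) K
  calc a b / (b - x₀) ^ K * (x - x₀) ^ K ≤ a x / (x - x₀) ^ K * (x - x₀) ^ K := by gcongr
    _ = a x := div_mul_cancel₀ _ hxK.ne'

theorem intervalIntegrable_one_div_sqrt_of_mul_rpow_le {a : ℝ → ℝ} {x₀ b K c : ℝ}
    (hxb : x₀ ≤ b) (hK : K < 2) (hc : 0 < c) (ha : ContinuousOn a (Ioc x₀ b))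
    (hlow : ∀ x ∈ Ioc x₀ b, c * (x - x₀) ^ K ≤ a x) :
    IntervalIntegrable (fun x => 1 / √(a x)) volume x₀ b := by
  have hdom : IntervalIntegrable (fun x => (√c)⁻¹ * (x - x₀) ^ (-(K / 2))) volume x₀ b := by
    have := (intervalIntegral.intervalIntegrable_rpow' (by linarith : -1 < -(K / 2))
      (a := x₀ - x₀) (b := b - x₀)).comp_sub_right x₀
    simpa using this.const_mul (√c)⁻¹
  refine hdom.mono_fun' ?_ ?_
  · rw [uIoc_of_le hxb]
    exact (Real.continuous_sqrt.comp_continuousOn ha).aestronglyMeasurable measurableSet_Ioc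
      |>.aemeasurable.const_div 1 |>.aestronglyMeasurable
  · rw [uIoc_of_le hxb, Filter.EventuallyLE, ae_restrict_iff' measurableSet_Ioc]
    refine ae_of_all _ fun x hx => ?_
    have hpos : 0 < x - x₀ := sub_pos.2 hx.1
    have hsqrt : √c * (x - x₀) ^ (K / 2) ≤ √(a x) := by
      calc √c * (x - x₀) ^ (K / 2) = √(c * (x - x₀) ^ K) := by
            rw [Real.sqrt_mul hc.le, Real.sqrt_eq_rpow ((x - x₀) ^ K), ← Real.rpow_mul hpos.le,
              mul_one_div]
        _ ≤ √(a x) := Real.sqrt_le_sqrt (hlow x hx)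
    have hprod : 0 < √c * (x - x₀) ^ (K / 2) := by positivity
    rw [Real.norm_of_nonneg (by positivity), Real.rpow_neg hpos.le, ← mul_inv]
    exact one_div_le_one_div_of_le hprod hsqrt |>.trans_eq (one_div _)

theorem intervalIntegrable_one_div_sqrt_of_ae_deriv_le_right {a : ℝ → ℝ} {x₀ b K : ℝ} {L : ℝ≥0}
    (hxb : x₀ < b) (hK : K < 2) (hLip : LipschitzOnWith L a (Icc x₀ b)) (hb : 0 < a b)
    (hineq : ∀ᵐ x ∂volume.restrict (Icc x₀ b), (x - x₀) * deriv a x ≤ K * a x) :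
    IntervalIntegrable (fun x => 1 / √(a x)) volume x₀ b :=
  intervalIntegrable_one_div_sqrt_of_mul_rpow_le hxb.le hK
    (div_pos hb (Real.rpow_pos_of_pos (sub_pos.2 hxb) K))
    (hLip.continuousOn.mono Ioc_subset_Icc_self)
    fun _ hx => div_rpow_mul_rpow_le_of_ae_deriv_le hLip hineq hx

theorem ae_mul_deriv_comp_neg_le {a : ℝ → ℝ} {x₀ K : ℝ} {s : Set ℝ}
    (h : ∀ᵐ x ∂volume.restrict s, (x - x₀) * deriv a x ≤ K * a x) :
    ∀ᵐ y ∂volume.restrict (-s), (y - -x₀) * deriv (fun y => a (-y)) y ≤ K * a (-y) := by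
  have hneg := (Measure.measurePreserving_neg (volume : Measure ℝ)).restrict_preimage_emb
    (Homeomorph.neg ℝ).isClosedEmbedding.measurableEmbedding s
  rw [neg_preimage] at hneg
  filter_upwards [hneg.quasiMeasurePreserving.ae h] with y hy
  rw [deriv_comp_neg]
  linarith

theorem intervalIntegrable_one_div_sqrt_of_ae_deriv_le_left {a : ℝ → ℝ} {b x₀ K : ℝ}
    {L : ℝ≥0} (hbx : b < x₀) (hK : K < 2) (hLip : LipschitzOnWith L a (Icc b x₀))
    (hb : 0 < a b) (hineq : ∀ᵐ x ∂volume.restrict (Icc b x₀), (x - x₀) * deriv a x ≤ K * a x) :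
    IntervalIntegrable (fun x => 1 / √(a x)) volume b x₀ := by
  have hLip' : LipschitzOnWith L (fun y => a (-y)) (Icc (-x₀) (-b)) := by
    have h := hLip.comp LipschitzWith.id.neg.lipschitzOnWith
      fun y (hy : y ∈ Icc (-x₀) (-b)) => ⟨le_neg.1 hy.2, neg_le.1 hy.1⟩
    rwa [mul_one] at h
  have hineq' := ae_mul_deriv_comp_neg_le hineq
  rw [neg_Icc] at hineq'
  have := intervalIntegrable_one_div_sqrt_of_ae_deriv_le_right (neg_lt_neg hbx) hK hLip'
    (by simpa using hb) hineq'
  simpa using (IntervalIntegrable.iff_comp_neg).1 this |>.symm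

theorem not_intervalIntegrable_one_div_of_lipschitzOnWith {a : ℝ → ℝ} {x₀ b : ℝ} {L : ℝ≥0}
    (hxb : x₀ < b) (hLip : LipschitzOnWith L a (Icc x₀ b)) (ha₀ : a x₀ = 0)
    (hpos : ∀ x ∈ Ioc x₀ b, 0 < a x) :
    ¬ IntervalIntegrable (fun x => 1 / a x) volume x₀ b := by
  intro h
  have hinv : IntervalIntegrable (fun x => (x - x₀)⁻¹) volume x₀ b := by
    refine (h.const_mul L).mono_fun' (by fun_prop) ?_
    rw [uIoc_of_le hxb.le, Filter.EventuallyLE, ae_restrict_iff' measurableSet_Ioc]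
    refine ae_of_all _ fun x hx => ?_
    have hdist : 0 < x - x₀ := sub_pos.2 hx.1
    have hle : a x ≤ L * (x - x₀) := by
      simpa [Real.dist_eq, ha₀, abs_of_pos (hpos x hx), abs_of_pos hdist]
        using hLip.dist_le_mul x ⟨hx.1.le, hx.2⟩ x₀ ⟨le_rfl, hxb.le⟩
    rw [Real.norm_of_nonneg (inv_nonneg.2 hdist.le), mul_one_div, le_div_iff₀ (hpos x hx)]
    calc (x - x₀)⁻¹ * a x ≤ (x - x₀)⁻¹ * (L * (x - x₀)) := by gcongr
      _ = L := by field_simp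
  simp [intervalIntegrable_sub_inv_iff, hxb.ne] at hinv

/-- Lemma 2.1.3: in the strongly degenerate case (a Lipschitz, K ∈ [1,2)),
`1/√a ∈ L¹(0,1)` but `1/a ∉ L¹(0,1)`. -/
theorem stmt2 (a : ℝ → ℝ) (x₀ K : ℝ) (L : NNReal)
    (hx₀ : x₀ ∈ Set.Ioo (0:ℝ) 1)
    (hLip : LipschitzOnWith L a (Set.Icc 0 1))
    (ha0 : a x₀ = 0)
    (hpos : ∀ x ∈ Set.Icc (0:ℝ) 1, x ≠ x₀ → 0 < a x)
    (hK : K ∈ Set.Ico (1:ℝ) 2)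
    (hineq : ∀ᵐ x ∂(MeasureTheory.volume.restrict (Set.Icc (0:ℝ) 1)),
      (x - x₀) * deriv a x ≤ K * a x) :
    MeasureTheory.IntegrableOn (fun x => 1 / Real.sqrt (a x)) (Set.Ioo 0 1) ∧
    ¬ MeasureTheory.IntegrableOn (fun x => 1 / a x) (Set.Ioo 0 1) := by
  obtain ⟨h0, h1⟩ := hx₀
  have hright : IntervalIntegrable (fun x => 1 / √(a x)) volume x₀ 1 :=
    intervalIntegrable_one_div_sqrt_of_ae_deriv_le_right h1 hK.2
      (hLip.mono (Icc_subset_Icc_left h0.le)) (hpos 1 ⟨zero_le_one, le_rfl⟩ h1.ne')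
      (ae_restrict_of_ae_restrict_of_subset (Icc_subset_Icc_left h0.le) hineq)
  have hleft : IntervalIntegrable (fun x => 1 / √(a x)) volume 0 x₀ :=
    intervalIntegrable_one_div_sqrt_of_ae_deriv_le_left h0 hK.2
      (hLip.mono (Icc_subset_Icc_right h1.le)) (hpos 0 ⟨le_rfl, zero_le_one⟩ h0.ne)
      (ae_restrict_of_ae_restrict_of_subset (Icc_subset_Icc_right h1.le) hineq)
  refine ⟨(intervalIntegrable_iff_integrableOn_Ioo_of_le zero_le_one).1 (hleft.trans hright),
    fun h => ?_⟩
  refine not_intervalIntegrable_one_div_of_lipschitzOnWith h1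
    (hLip.mono (Icc_subset_Icc_left h0.le)) ha0
    (fun x hx => hpos x ⟨h0.le.trans hx.1.le, hx.2⟩ hx.1.ne') ?_
  exact (intervalIntegrable_iff_integrableOn_Ioo_of_le h1.le).2
    (h.mono_set (Ioo_subset_Ioo_left h0.le))
end

section
/- Let a ∈ W^{1,∞}(0,1) satisfy the strong degeneracy hypothesis: a(x₀)=0 for x₀ ∈ (0,1), a > 0 on [0,1]\{x₀}, (x-x₀)a' ≤ K a a.e. with K ∈ [1,2). Then there exists C > 0 such that for every v ∈ H¹₀(0,1) with ∫₀¹ v²/a dx < ∞, one has ∫₀¹ v²(x)/a(x) dx ≤ C ∫₀¹ v'(x)² dx. -/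
/-!
Away from `x₀` the hypothesis `(x - x₀) a' ≤ K a` says that `a(x) |x - x₀|^(-K)` decreases as
`x` moves away from `x₀`; since a Lipschitz function is absolutely continuous, this integrates to
`a(x) ≥ c |x - x₀|^K` on `[0, 1]`. On the other hand `a(x) ≤ L |x - x₀|`, so finiteness of
`∫ v²/a` forces `v(x₀) = 0`, and Cauchy–Schwarz then gives `v(x)² ≤ |x - x₀| ∫ v'²`. Hence
`v²/a ≤ (∫ v'² / c) |x - x₀|^(1 - K)`, which is integrable because `K < 2`.
-/

open MeasureTheory Set Filter Topology Asymptotics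
open scoped Interval NNReal

theorem mul_sub_rpow_le_of_sub_mul_deriv_le_right {f : ℝ → ℝ} {L : ℝ≥0} {x₀ K p q : ℝ}
    (hf : LipschitzOnWith L f (Icc p q)) (hx₀ : x₀ < p) (hpq : p ≤ q)
    (h : ∀ᵐ y, y ∈ Icc p q → (y - x₀) * deriv f y ≤ K * f y) :
    f q * (p - x₀) ^ K ≤ f p * (q - x₀) ^ K := by
  have hpos : ∀ y ∈ Icc p q, 0 < y - x₀ := fun y hy => by linarith [hy.1]
  rw [← uIcc_of_le hpq] at hf hpos
  have hf_ac : AbsolutelyContinuousOnInterval f p q := hf.absolutelyContinuousOnInterval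
  have hw_ac : AbsolutelyContinuousOnInterval (fun y => (y - x₀) ^ (-K)) p q :=
    ContDiffOn.absolutelyContinuousOnInterval <|
      (contDiffOn_id.sub contDiffOn_const).rpow_const_of_ne fun y hy => (hpos y hy).ne'
  have hg_ac := hf_ac.fun_mul hw_ac
  have hderiv : ∀ᵐ y ∂volume.restrict (Icc p q),
      deriv (fun y => f y * (y - x₀) ^ (-K)) y ≤ 0 := by
    filter_upwards [ae_restrict_of_ae h, ae_restrict_of_ae hf_ac.ae_differentiableAt,
      ae_restrict_mem measurableSet_Icc] with y hy hdiff hmem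
    rw [← uIcc_of_le hpq] at hmem
    have ht := hpos y hmem
    have hw : HasDerivAt (fun y => (y - x₀) ^ (-K)) (1 * (-K) * (y - x₀) ^ (-K - 1)) y :=
      ((hasDerivAt_id y).sub_const x₀).rpow_const (Or.inl ht.ne')
    have hprod : deriv f y * (y - x₀) ^ (-K) + f y * (1 * -K * (y - x₀) ^ (-K - 1))
        = (y - x₀) ^ (-K - 1) * ((y - x₀) * deriv f y - K * f y) := by
      rw [Real.rpow_sub_one ht.ne']; field_simp; ring
    rw [((hdiff hmem).hasDerivAt.fun_mul hw).deriv, hprod]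
    exact mul_nonpos_of_nonneg_of_nonpos (by positivity)
      (sub_nonpos.2 (hy (uIcc_of_le hpq ▸ hmem)))
  have hle := intervalIntegral.integral_mono_ae_restrict hpq hg_ac.intervalIntegrable_deriv
    intervalIntegrable_const hderiv
  rw [hg_ac.integral_deriv_eq_sub, intervalIntegral.integral_zero] at hle
  have hp := hpos p left_mem_uIcc
  have hq := hpos q right_mem_uIcc
  rw [Real.rpow_neg hp.le, Real.rpow_neg hq.le] at hle
  have hp' := Real.rpow_pos_of_pos hp K
  have hq' := Real.rpow_pos_of_pos hq K
  field_simp at hle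
  linarith

theorem mul_sub_rpow_le_of_sub_mul_deriv_le_left {f : ℝ → ℝ} {L : ℝ≥0} {x₀ K p q : ℝ}
    (hf : LipschitzOnWith L f (Icc p q)) (hx₀ : q < x₀) (hpq : p ≤ q)
    (h : ∀ᵐ y, y ∈ Icc p q → (y - x₀) * deriv f y ≤ K * f y) :
    f p * (x₀ - q) ^ K ≤ f q * (x₀ - p) ^ K := by
  have hneg : LipschitzOnWith L (fun y => f (-y)) (Icc (-q) (-p)) := by
    have hmaps : MapsTo (fun y : ℝ => -y) (Icc (-q) (-p)) (Icc p q) :=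
      fun y hy => ⟨le_neg.2 hy.2, neg_le.2 hy.1⟩
    have := hf.comp (isometry_neg (G := ℝ)).lipschitz.lipschitzOnWith hmaps
    rwa [mul_one] at this
  have h' : ∀ᵐ y, y ∈ Icc (-q) (-p) → (y - -x₀) * deriv (fun y => f (-y)) y ≤ K * f (-y) := by
    filter_upwards [(Measure.measurePreserving_neg volume).quasiMeasurePreserving.ae h]
      with y hy hmem
    rw [deriv_comp_neg]
    have := hy ⟨by linarith [hmem.2], by linarith [hmem.1]⟩
    linarith
  have := mul_sub_rpow_le_of_sub_mul_deriv_le_right hneg (by linarith) (by linarith) h'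
  simp only [neg_neg] at this
  convert this using 3 <;> ring

theorem exists_mul_abs_sub_rpow_le {f : ℝ → ℝ} {L : ℝ≥0} {x₀ K p q : ℝ}
    (hf : LipschitzOnWith L f (Icc p q)) (hx₀ : x₀ ∈ Ioo p q) (hfp : 0 < f p) (hfq : 0 < f q)
    (h : ∀ᵐ y, y ∈ Icc p q → (y - x₀) * deriv f y ≤ K * f y) :
    ∃ c > 0, ∀ x ∈ Icc p q, x ≠ x₀ → c * |x - x₀| ^ K ≤ f x := by
  have hp : 0 < x₀ - p := sub_pos.2 hx₀.1
  have hq : 0 < q - x₀ := sub_pos.2 hx₀.2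
  refine ⟨min (f p / (x₀ - p) ^ K) (f q / (q - x₀) ^ K), by positivity, fun x hx hne => ?_⟩
  rcases hne.lt_or_gt with hlt | hgt
  · have hsub : Icc p x ⊆ Icc p q := Icc_subset_Icc_right hx.2
    have key := mul_sub_rpow_le_of_sub_mul_deriv_le_left (hf.mono hsub) hlt hx.1
      (h.mono fun y hy hmem => hy (hsub hmem))
    rw [abs_of_neg (sub_neg.2 hlt), neg_sub]
    calc min (f p / (x₀ - p) ^ K) (f q / (q - x₀) ^ K) * (x₀ - x) ^ K
        ≤ f p / (x₀ - p) ^ K * (x₀ - x) ^ K := by gcongr; exact min_le_left _ _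
      _ ≤ f x := by rw [div_mul_eq_mul_div, div_le_iff₀ (by positivity)]; exact key
  · have hsub : Icc x q ⊆ Icc p q := Icc_subset_Icc_left hx.1
    have key := mul_sub_rpow_le_of_sub_mul_deriv_le_right (hf.mono hsub) hgt hx.2
      (h.mono fun y hy hmem => hy (hsub hmem))
    rw [abs_of_pos (sub_pos.2 hgt)]
    calc min (f p / (x₀ - p) ^ K) (f q / (q - x₀) ^ K) * (x - x₀) ^ K
        ≤ f q / (q - x₀) ^ K * (x - x₀) ^ K := by gcongr; exact min_le_right _ _
      _ ≤ f x := by rw [div_mul_eq_mul_div, div_le_iff₀ (by positivity)]; exact key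

theorem sq_integral_le_measureReal_mul_integral_sq {α : Type*} [MeasurableSpace α]
    {μ : Measure α} [IsFiniteMeasure μ] {f : α → ℝ} (hf : MemLp f 2 μ) :
    (∫ x, f x ∂μ) ^ 2 ≤ μ.real univ * ∫ x, f x ^ 2 ∂μ := by
  rcases eq_zero_or_neZero μ with rfl | hμ
  · simp
  have hjensen := (even_two.convexOn_pow (𝕜 := ℝ)).map_average_le (continuous_pow 2).continuousOn
    isClosed_univ (Eventually.of_forall fun _ => mem_univ _) (hf.integrable one_le_two)
    hf.integrable_sq
  have hm : 0 < μ.real univ := by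
    rw [measureReal_def]; exact ENNReal.toReal_pos (NeZero.ne _) (measure_ne_top _ _)
  simp only [average_eq, smul_eq_mul] at hjensen
  field_simp at hjensen
  linarith

theorem sq_sub_le_abs_sub_mul_integral_sq {v v' : ℝ → ℝ} {p q x y : ℝ}
    (hv : ∀ t ∈ Icc p q, HasDerivAt v (v' t) t)
    (hv' : IntegrableOn (fun t => v' t ^ 2) (Icc p q)) (hx : x ∈ Icc p q) (hy : y ∈ Icc p q) :
    (v y - v x) ^ 2 ≤ |y - x| * ∫ t in Icc p q, v' t ^ 2 := by
  have hsub : Ι x y ⊆ Icc p q := uIoc_subset_uIcc.trans (uIcc_subset_Icc hx hy)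
  have hmeas : AEStronglyMeasurable v' (volume.restrict (Icc p q)) :=
    (measurable_deriv v).aestronglyMeasurable.congr <|
      (ae_restrict_mem measurableSet_Icc).mono fun t ht => (hv t ht).deriv
  have hL2 : MemLp v' 2 (volume.restrict (Ι x y)) :=
    ((memLp_two_iff_integrable_sq hmeas).2 hv').mono_measure (Measure.restrict_mono hsub le_rfl)
  have : IsFiniteMeasure (volume.restrict (Ι x y)) :=
    isFiniteMeasure_restrict.2 (by simp [Real.volume_uIoc])
  have hftc : ∫ t in x..y, v' t = v y - v x :=
    intervalIntegral.integral_eq_sub_of_hasDerivAt (fun t ht => hv t (uIcc_subset_Icc hx hy ht))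
      (intervalIntegrable_iff.2 (hL2.integrable one_le_two))
  calc (v y - v x) ^ 2 = (∫ t in Ι x y, v' t) ^ 2 := by
        rw [← hftc, ← sq_abs, intervalIntegral.abs_integral_eq_abs_integral_uIoc, sq_abs]
    _ ≤ (volume.restrict (Ι x y)).real univ * ∫ t in Ι x y, v' t ^ 2 :=
        sq_integral_le_measureReal_mul_integral_sq hL2
    _ = |y - x| * ∫ t in Ι x y, v' t ^ 2 := by
        rw [measureReal_restrict_apply_univ, measureReal_def, Real.volume_uIoc,
          ENNReal.toReal_ofReal (abs_nonneg _)]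
    _ ≤ |y - x| * ∫ t in Icc p q, v' t ^ 2 :=
        mul_le_mul_of_nonneg_left (setIntegral_mono_set hv'
          (Eventually.of_forall fun t => sq_nonneg _) hsub.eventuallyLE) (abs_nonneg _)

theorem eq_zero_of_integrableOn_sq_div {a v : ℝ → ℝ} {L : ℝ≥0} {x₀ p q : ℝ}
    (ha : LipschitzOnWith L a (Icc p q)) (hx₀ : x₀ ∈ Ioo p q) (ha₀ : a x₀ = 0)
    (hpos : ∀ x ∈ Icc p q, x ≠ x₀ → 0 < a x) (hv : ContinuousAt v x₀)
    (hint : IntegrableOn (fun x => v x ^ 2 / a x) (Ioo p q)) : v x₀ = 0 := by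
  by_contra hne
  have hpq : p < q := hx₀.1.trans hx₀.2
  refine not_intervalIntegrable_of_sub_inv_isBigO_punctured ?_ hpq.ne
    (uIcc_of_le hpq.le ▸ Ioo_subset_Icc_self hx₀)
    ((intervalIntegrable_iff_integrableOn_Ioo_of_le hpq.le).2 hint)
  have hv₀ : 0 < v x₀ ^ 2 := by positivity
  have hnear : ∀ᶠ x in 𝓝 x₀, v x₀ ^ 2 / 2 < v x ^ 2 :=
    (hv.fun_pow 2).eventually (lt_mem_nhds (by linarith))
  refine IsBigO.of_bound (2 * L / v x₀ ^ 2) ?_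
  filter_upwards [nhdsWithin_le_nhds (Icc_mem_nhds hx₀.1 hx₀.2), nhdsWithin_le_nhds hnear,
    self_mem_nhdsWithin] with x hx hvx hxx₀
  have hax := hpos x hx hxx₀
  have hd : 0 < |x - x₀| := abs_pos.2 (sub_ne_zero.2 hxx₀)
  have hlip : a x ≤ |x - x₀| * L := by
    have := ha.dist_le_mul x hx x₀ (Ioo_subset_Icc_self hx₀)
    rw [Real.dist_eq, Real.dist_eq, ha₀, sub_zero] at this
    linarith [le_abs_self (a x)]
  rw [norm_inv, Real.norm_eq_abs, Real.norm_of_nonneg (div_nonneg (sq_nonneg _) hax.le)]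
  calc |x - x₀|⁻¹ ≤ L / a x := by rw [le_div_iff₀ hax, inv_mul_le_iff₀ hd]; exact hlip
    _ = 2 * L / v x₀ ^ 2 * (v x₀ ^ 2 / 2 / a x) := by field_simp
    _ ≤ 2 * L / v x₀ ^ 2 * (v x ^ 2 / a x) := by gcongr

theorem intervalIntegrable_abs_sub_rpow {r c a b : ℝ} (hr : -1 < r) :
    IntervalIntegrable (fun x => |x - c| ^ r) volume a b := by
  have hright : IntervalIntegrable (fun x => (x - c) ^ r) volume a b := by
    simpa using
      (intervalIntegral.intervalIntegrable_rpow' hr (a := a - c) (b := b - c)).comp_sub_right c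
  have hleft : IntervalIntegrable (fun x => (c - x) ^ r) volume a b := by
    simpa using
      (intervalIntegral.intervalIntegrable_rpow' hr (a := c - a) (b := c - b)).comp_sub_left c
  refine (hright.norm.add hleft.norm).mono_fun'
    ((measurable_id.sub_const c).abs.pow_const r).aestronglyMeasurable
    (Eventually.of_forall fun x => ?_)
  simp only [Real.norm_eq_abs]
  rcases le_total c x with h | h
  · rw [abs_of_nonneg (sub_nonneg.2 h)]
    linarith [abs_nonneg ((c - x) ^ r), le_abs_self ((x - c) ^ r)]
  · rw [abs_of_nonpos (sub_nonpos.2 h), neg_sub]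
    linarith [abs_nonneg ((x - c) ^ r), le_abs_self ((c - x) ^ r)]

/-- Lemma 2.11 (Hardy-type inequality in the strongly degenerate case):
there is `C > 0` such that `∫ v²/a ≤ C ∫ (v')²` for all `v ∈ H¹_{1/a}(0,1)`. -/
theorem stmt5 (a : ℝ → ℝ) (x₀ K : ℝ) (L : NNReal)
    (hx₀ : x₀ ∈ Set.Ioo (0:ℝ) 1)
    (hLip : LipschitzOnWith L a (Set.Icc 0 1))
    (ha0 : a x₀ = 0)
    (hpos : ∀ x ∈ Set.Icc (0:ℝ) 1, x ≠ x₀ → 0 < a x)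
    (hK : K ∈ Set.Ico (1:ℝ) 2)
    (hineq : ∀ᵐ x ∂(MeasureTheory.volume.restrict (Set.Icc (0:ℝ) 1)),
      (x - x₀) * deriv a x ≤ K * a x) :
    ∃ C > 0, ∀ (v v' : ℝ → ℝ),
      (∀ x ∈ Set.Icc (0:ℝ) 1, HasDerivAt v (v' x) x) →
      v 0 = 0 → v 1 = 0 →
      MeasureTheory.IntegrableOn (fun x => (v' x) ^ 2) (Set.Ioo 0 1) →
      MeasureTheory.IntegrableOn (fun x => (v x) ^ 2 / a x) (Set.Ioo 0 1) →
      (∫ x in Set.Ioo (0:ℝ) 1, (v x) ^ 2 / a x) ≤ C * ∫ x in Set.Ioo (0:ℝ) 1, (v' x) ^ 2 := by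
  obtain ⟨c, hc, hlow⟩ := exists_mul_abs_sub_rpow_le hLip hx₀
    (hpos 0 (left_mem_Icc.2 zero_le_one) hx₀.1.ne) (hpos 1 (right_mem_Icc.2 zero_le_one) hx₀.2.ne')
    ((ae_restrict_iff' measurableSet_Icc).1 hineq)
  have hweight : IntegrableOn (fun x => |x - x₀| ^ (1 - K)) (Ioo 0 1) :=
    (intervalIntegrable_iff_integrableOn_Ioo_of_le zero_le_one).1
      (intervalIntegrable_abs_sub_rpow (by linarith [hK.2]))
  set M := ∫ x in Ioo (0:ℝ) 1, |x - x₀| ^ (1 - K)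
  have hM : 0 ≤ M := setIntegral_nonneg measurableSet_Ioo fun x _ => by positivity
  refine ⟨(M + 1) / c, by positivity, fun v v' hv _ _ hv' hva => ?_⟩
  set D := ∫ x in Ioo (0:ℝ) 1, v' x ^ 2
  have hD : 0 ≤ D := setIntegral_nonneg measurableSet_Ioo fun x _ => sq_nonneg _
  have hx₀' : x₀ ∈ Icc (0:ℝ) 1 := Ioo_subset_Icc_self hx₀
  have hv₀ : v x₀ = 0 :=
    eq_zero_of_integrableOn_sq_div hLip hx₀ ha0 hpos (hv x₀ hx₀').continuousAt hva
  have hbound : ∀ᵐ x ∂volume.restrict (Ioo 0 1), v x ^ 2 / a x ≤ D / c * |x - x₀| ^ (1 - K) := by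
    filter_upwards [ae_restrict_mem measurableSet_Ioo, ae_restrict_of_ae (volume.ae_ne x₀)]
      with x hx hne
    have hd : 0 < |x - x₀| := abs_pos.2 (sub_ne_zero.2 hne)
    have hsq := sq_sub_le_abs_sub_mul_integral_sq hv (hv'.congr_set_ae Ioo_ae_eq_Icc.symm) hx₀'
      (Ioo_subset_Icc_self hx)
    rw [hv₀, sub_zero, integral_Icc_eq_integral_Ioo] at hsq
    calc v x ^ 2 / a x ≤ |x - x₀| * D / (c * |x - x₀| ^ K) :=
          div_le_div₀ (by positivity) hsq (by positivity) (hlow x (Ioo_subset_Icc_self hx) hne)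
      _ = D / c * |x - x₀| ^ (1 - K) := by
          rw [Real.rpow_sub hd, Real.rpow_one]; field_simp
  calc ∫ x in Ioo 0 1, v x ^ 2 / a x ≤ ∫ x in Ioo 0 1, D / c * |x - x₀| ^ (1 - K) :=
        integral_mono_ae hva (hweight.const_mul _) hbound
    _ = D / c * M := integral_const_mul _ _
    _ ≤ (M + 1) / c * D := by
        rw [div_mul_eq_mul_div, div_mul_eq_mul_div, mul_comm D M]; gcongr; linarith
end

section
/- Negativity of the Carleman weight: let x₀ ∈ (0,1), let a satisfy a degeneracy hypothesis with constant K ∈ (0,2) (so |x-x₀|^K/a is monotone toward x₀ in the sense of Lemma on monotonicity), and define ψ(x) = c₁[∫_{x₀}^x (y-x₀)/a(y) dy - c₂] with c₁ > 0 and c₂ > max{(1-x₀)²/(a(1)(2-K)), x₀²/(a(0)(2-K))}. Then -c₁c₂ ≤ ψ(x) < 0 for every x ∈ [0,1]. -/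
open MeasureTheory Set intervalIntegral

lemma aux_side (g : ℝ → ℝ) (x₀ K b x : ℝ) (hx₀b : x₀ < b) (hK0 : 0 < K) (hK2 : K < 2)
    (hgpos : ∀ y ∈ Set.Ioc x₀ b, 0 < g y)
    (hmono : MonotoneOn (fun y => |y - x₀| ^ K / g y) (Set.Ioc x₀ b))
    (hint : IntervalIntegrable (fun y => (y - x₀) / g y) volume x₀ x)
    (hx : x ∈ Set.Icc x₀ b) :
    (0 ≤ ∫ y in x₀..x, (y - x₀) / g y) ∧
      (∫ y in x₀..x, (y - x₀) / g y) ≤ (b - x₀) ^ 2 / (g b * (2 - K)) := by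
  obtain ⟨hx₀x, hxb⟩ := hx
  have hgb : 0 < g b := hgpos b ⟨hx₀b, le_refl b⟩
  set M : ℝ := (b - x₀) ^ K / g b with hM
  have hMpos : 0 < M := div_pos (Real.rpow_pos_of_pos (by linarith) K) hgb
  have hnonneg : ∀ y ∈ Set.Icc x₀ x, 0 ≤ (y - x₀) / g y := by
    intro y ⟨hy1, hy2⟩
    rcases eq_or_lt_of_le hy1 with h | h
    · simp [← h]
    · exact le_of_lt (div_pos (by linarith) (hgpos y ⟨h, le_trans hy2 hxb⟩))
  constructor
  · exact intervalIntegral.integral_nonneg hx₀x hnonneg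
  · have hle : ∀ y ∈ Set.Icc x₀ x, (y - x₀) / g y ≤ M * (y - x₀) ^ (1 - K) := by
      intro y ⟨hy1, hy2⟩
      rcases eq_or_lt_of_le hy1 with h | h
      · have : (0:ℝ) ≤ M * (0:ℝ) ^ (1 - K) :=
          mul_nonneg hMpos.le (Real.rpow_nonneg le_rfl _)
        simpa [← h] using this
      · have hy0 : 0 < y - x₀ := by linarith
        have hmem : y ∈ Set.Ioc x₀ b := ⟨h, le_trans hy2 hxb⟩
        have h1 : |y - x₀| ^ K / g y ≤ |b - x₀| ^ K / g b :=
          hmono hmem ⟨hx₀b, le_refl b⟩ (le_trans hy2 hxb)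
        rw [abs_of_pos hy0, abs_of_pos (by linarith : (0:ℝ) < b - x₀)] at h1
        have h2 : (y - x₀) ^ (1 - K) * ((y - x₀) ^ K / g y)
            ≤ (y - x₀) ^ (1 - K) * M :=
          mul_le_mul_of_nonneg_left h1 (Real.rpow_nonneg hy0.le _)
        calc (y - x₀) / g y = (y - x₀) ^ (1 - K) * ((y - x₀) ^ K / g y) := by
              rw [← mul_div_assoc, ← Real.rpow_add hy0]
              norm_num
          _ ≤ (y - x₀) ^ (1 - K) * M := h2
          _ = M * (y - x₀) ^ (1 - K) := mul_comm _ _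
    have hintg : IntervalIntegrable (fun y => M * (y - x₀) ^ (1 - K)) volume x₀ x := by
      have h0 : IntervalIntegrable (fun u : ℝ => u ^ (1 - K)) volume (x₀ - x₀) (x - x₀) :=
        intervalIntegral.intervalIntegrable_rpow' (by linarith)
      have := (h0.comp_sub_right x₀)
      simpa using this.const_mul M
    have hmonoInt := intervalIntegral.integral_mono_on hx₀x hint hintg hle
    have hcalc : (∫ y in x₀..x, M * (y - x₀) ^ (1 - K))
        = M * ((x - x₀) ^ (2 - K) / (2 - K)) := by
      rw [intervalIntegral.integral_const_mul]
      have := intervalIntegral.integral_comp_sub_right (fun u : ℝ => u ^ (1 - K)) x₀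
        (a := x₀) (b := x)
      rw [this, sub_self, integral_rpow (Or.inl (by linarith : (-1:ℝ) < 1 - K))]
      rw [Real.zero_rpow (by linarith : 1 - K + 1 ≠ 0)]
      ring_nf
    have hfinal : M * ((x - x₀) ^ (2 - K) / (2 - K)) ≤ (b - x₀) ^ 2 / (g b * (2 - K)) := by
      have h1 : (x - x₀) ^ (2 - K) ≤ (b - x₀) ^ (2 - K) :=
        Real.rpow_le_rpow (by linarith) (by linarith) (by linarith)
      have h2 : M * ((x - x₀) ^ (2 - K) / (2 - K)) ≤ M * ((b - x₀) ^ (2 - K) / (2 - K)) :=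
        mul_le_mul_of_nonneg_left (div_le_div_of_nonneg_right h1 (by linarith)) hMpos.le
      refine le_trans h2 (le_of_eq ?_)
      have hb2 : (b - x₀) ^ K * (b - x₀) ^ (2 - K) = (b - x₀) ^ 2 := by
        rw [← Real.rpow_add (by linarith : (0:ℝ) < b - x₀)]
        norm_num
      rw [hM, div_mul_div_comm, hb2]
    linarith [hmonoInt, hcalc ▸ hmonoInt]

/-- Negativity of the degenerate Carleman weight: with
`ψ(x) = c₁ (∫_{x₀}^x (y-x₀)/a(y) dy - c₂)` and `c₂` large enough,
`-c₁ c₂ ≤ ψ < 0` on `[0,1]`. -/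
theorem stmt10 (a : ℝ → ℝ) (x₀ K c₁ c₂ : ℝ)
    (hx₀ : x₀ ∈ Set.Ioo (0:ℝ) 1)
    (hcont : ContinuousOn a (Set.Icc 0 1))
    (ha0 : a x₀ = 0)
    (hpos : ∀ x ∈ Set.Icc (0:ℝ) 1, x ≠ x₀ → 0 < a x)
    (hK : K ∈ Set.Ioo (0:ℝ) 2)
    (hmono : AntitoneOn (fun x => |x - x₀| ^ K / a x) (Set.Ico 0 x₀) ∧
      MonotoneOn (fun x => |x - x₀| ^ K / a x) (Set.Ioc x₀ 1))
    (hint : MeasureTheory.IntegrableOn (fun y => (y - x₀) / a y) (Set.Ioo 0 1))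
    (hc₁ : 0 < c₁)
    (hc₂ : c₂ > max ((1 - x₀) ^ 2 / (a 1 * (2 - K))) (x₀ ^ 2 / (a 0 * (2 - K)))) :
    ∀ x ∈ Set.Icc (0:ℝ) 1,
      -c₁ * c₂ ≤ c₁ * ((∫ y in x₀..x, (y - x₀) / a y) - c₂) ∧
      c₁ * ((∫ y in x₀..x, (y - x₀) / a y) - c₂) < 0 := by
  obtain ⟨hx₀0, hx₀1⟩ := hx₀
  obtain ⟨hK0, hK2⟩ := hK
  have hIcc : MeasureTheory.IntegrableOn (fun y => (y - x₀) / a y) (Set.Icc 0 1) :=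
    (integrableOn_Icc_iff_integrableOn_Ioo).2 hint
  have hII : ∀ x ∈ Set.Icc (0:ℝ) 1,
      IntervalIntegrable (fun y => (y - x₀) / a y) MeasureTheory.volume x₀ x := by
    intro x hx
    exact (hIcc.mono_set (Set.uIcc_subset_Icc ⟨hx₀0.le, hx₀1.le⟩ hx)).intervalIntegrable
  intro x hx
  have key : (0 ≤ ∫ y in x₀..x, (y - x₀) / a y) ∧
      (∫ y in x₀..x, (y - x₀) / a y) <  c₂ := by
    rcases le_or_gt x₀ x with hcase | hcase
    · -- right side
      have := aux_side a x₀ K 1 x hx₀1 hK0 hK2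
        (fun y hy => hpos y ⟨le_trans hx₀0.le hy.1.le, hy.2⟩ (ne_of_gt hy.1))
        hmono.2 (hII x hx) ⟨hcase, hx.2⟩
      exact ⟨this.1, lt_of_le_of_lt (this.2.trans (le_max_left _ _)) hc₂⟩
    · -- left side: reflect
      set g : ℝ → ℝ := fun u => a (2 * x₀ - u) with hg
      have hmem : ∀ u ∈ Set.Ioc x₀ (2 * x₀), 2 * x₀ - u ∈ Set.Ico (0:ℝ) x₀ := by
        intro u hu
        exact ⟨by linarith [hu.2], by linarith [hu.1]⟩
      have hgpos : ∀ u ∈ Set.Ioc x₀ (2 * x₀), 0 < g u := by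
        intro u hu
        have h := hmem u hu
        exact hpos _ ⟨h.1, by linarith [h.2]⟩ (ne_of_lt h.2)
      have hgmono : MonotoneOn (fun u => |u - x₀| ^ K / g u) (Set.Ioc x₀ (2 * x₀)) := by
        intro u hu v hv huv
        have h := hmono.1 (hmem v hv) (hmem u hu) (by linarith)
        simpa [hg, abs_sub_comm, show ∀ w : ℝ, 2 * x₀ - w - x₀ = x₀ - w by intro w; ring]
          using h
      have hIIx := hII x hx
      have hgint : IntervalIntegrable (fun u => (u - x₀) / g u) MeasureTheory.volume
          x₀ (2 * x₀ - x) := by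
        have h1 := ((hIIx.symm.comp_sub_left (2 * x₀)).neg).symm
        have h2 : (-fun u : ℝ => (2 * x₀ - u - x₀) / a (2 * x₀ - u))
            = fun u => (u - x₀) / g u := by
          funext u
          simp only [Pi.neg_apply]
          rw [hg, ← neg_div, show -(2 * x₀ - u - x₀) = u - x₀ by ring]
        rw [h2] at h1
        simpa [show 2 * x₀ - x₀ = x₀ by ring] using h1
      have haux := aux_side g x₀ K (2 * x₀) (2 * x₀ - x) (by linarith) hK0 hK2
        hgpos hgmono hgint ⟨by linarith [hcase.le], by linarith [hx.1]⟩
      have heq : (∫ u in x₀..(2 * x₀ - x), (u - x₀) / g u)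
          = ∫ y in x₀..x, (y - x₀) / a y := by
        have h1 := intervalIntegral.integral_comp_sub_left
          (fun y => (y - x₀) / a y) (2 * x₀) (a := x₀) (b := 2 * x₀ - x)
        have h2 : (∫ u in x₀..(2 * x₀ - x), (2 * x₀ - u - x₀) / a (2 * x₀ - u))
            = ∫ u in x₀..(2 * x₀ - x), -((u - x₀) / g u) := by
          congr 1
          funext u
          rw [hg, ← neg_div, show -(u - x₀) = 2 * x₀ - u - x₀ by ring]
        rw [h2] at h1
        rw [intervalIntegral.integral_neg] at h1
        have h3 : 2 * x₀ - (2 * x₀ - x) = x := by ring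
        have h4 : 2 * x₀ - x₀ = x₀ := by ring
        rw [h3, h4] at h1
        have := intervalIntegral.integral_symm (μ := MeasureTheory.volume) x x₀
          (f := fun y => (y - x₀) / a y)
        linarith [h1, this]
      rw [heq] at haux
      have hg2x₀ : g (2 * x₀) = a 0 := by rw [hg]; norm_num
      have hb2 : (2 * x₀ - x₀) ^ 2 = x₀ ^ 2 := by ring
      rw [hg2x₀, hb2] at haux
      exact ⟨haux.1, lt_of_le_of_lt (haux.2.trans (le_max_right _ _)) hc₂⟩
  obtain ⟨h0, h1⟩ := key
  constructor
  · nlinarith [mul_nonneg hc₁.le h0]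
  · have : (∫ y in x₀..x, (y - x₀) / a y) - c₂ < 0 := by linarith
    exact mul_neg_of_pos_of_neg hc₁ this
end
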